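/- arXiv:2105.03325 — 5 statements merged into one kernel-verified Lean document; each statement's English description precedes it below -/
import Mathlib

section
/- Let p ∈ (0,1) and let w₁, w₋₁, c₁, c₋₁ be real numbers satisfying conditions C1–C3 with w₁ > 0 and w₋₁ > 0. Let Y₁ and Y₋₁ be square-integrable real random variables on a probability space with E[Y₁] − E[Y₋₁] = τ₀. Then for every real number g, the function L(t) = p·w₁·E[(Y₁ − g − c₁·t)²] + (1−p)·w₋₁·E[(Y₋₁ − g − c₋₁·t)²] has a unique minimizer over t ∈ ℝ, namely t = τ₀. -/
/-!
By the bias–variance identity `E[(Z - a)²] = Var Z + (E Z - a)²`, the objective is the constant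
`p w₁ Var Y₁ + (1 - p) w₋₁ Var Y₋₁` plus a quadratic in `t`. Writing `A = p w₁`, `B = (1 - p) w₋₁`,
conditions C1 and C2 make that quadratic equal to its value at `τ₀` plus `A c₁ (t - τ₀)²`, and they
force `A c₁ = A B / (A + B) > 0`.
-/

open MeasureTheory ProbabilityTheory

lemma integral_sub_const_sq {Ω : Type*} [MeasurableSpace Ω] {P : Measure Ω}
    [IsProbabilityMeasure P] {Z : Ω → ℝ} (hZ : MemLp Z 2 P) (a : ℝ) :
    ∫ ω, (Z ω - a) ^ 2 ∂P = Var[Z; P] + (P[Z] - a) ^ 2 := by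
  have hZa : MemLp (fun ω ↦ Z ω - a) 2 P := hZ.sub (memLp_const a)
  have hmean : ∫ ω, (Z ω - a) ∂P = P[Z] - a := by
    simp [integral_sub (hZ.integrable one_le_two) (integrable_const a)]
  rw [← variance_sub_const hZ.aestronglyMeasurable a, variance_eq_sub hZa, hmean]
  simp

section WeightedSquares

variable {R : Type*} [CommRing R] {A B c d : R}

lemma mul_pos_of_mul_add_mul_eq_zero_of_sub_eq_one [LinearOrder R] [IsStrictOrderedRing R]
    (hA : 0 < A) (hB : 0 < B) (hsum : A * c + B * d = 0) (hdiff : c - d = 1) : 0 < A * c := by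
  have h : A * c * (A + B) = A * B := by linear_combination A * hsum + A * B * hdiff
  exact pos_of_mul_pos_left (h ▸ mul_pos hA hB) (add_pos hA hB).le

lemma weighted_sq_sub_eq_add_mul_sq {m n τ : R} (hsum : A * c + B * d = 0) (hdiff : c - d = 1)
    (hτ : m - n = τ) (U V t : R) :
    A * (U + (m - c * t) ^ 2) + B * (V + (n - d * t) ^ 2)
      = A * (U + (m - c * τ) ^ 2) + B * (V + (n - d * τ) ^ 2) + A * c * (t - τ) ^ 2 := by
  subst hτ
  linear_combination (t - (m - n)) * (d * (t + (m - n)) - 2 * n) * hsum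
    + A * c * (t - (m - n)) * (t + (m - n)) * hdiff

end WeightedSquares

theorem stmt0_general {Ω : Type*} [MeasurableSpace Ω] (P : Measure Ω) [IsProbabilityMeasure P]
    (p w1 wm1 c1 cm1 τ0 : ℝ) (hp : p ∈ Set.Ioo (0 : ℝ) 1)
    (hC1 : p * w1 * c1 + (1 - p) * wm1 * cm1 = 0)
    (hC2 : c1 - cm1 = 1)
    (hw1 : 0 < w1) (hwm1 : 0 < wm1)
    (Y1 Ym1 : Ω → ℝ)
    (hY1 : MemLp Y1 2 P) (hYm1 : MemLp Ym1 2 P)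
    (hτ : (∫ ω, Y1 ω ∂P) - (∫ ω, Ym1 ω ∂P) = τ0)
    (g : ℝ) :
    ∀ t : ℝ, t ≠ τ0 →
      p * w1 * (∫ ω, (Y1 ω - g - c1 * τ0) ^ 2 ∂P)
          + (1 - p) * wm1 * (∫ ω, (Ym1 ω - g - cm1 * τ0) ^ 2 ∂P)
        < p * w1 * (∫ ω, (Y1 ω - g - c1 * t) ^ 2 ∂P)
          + (1 - p) * wm1 * (∫ ω, (Ym1 ω - g - cm1 * t) ^ 2 ∂P) := by
  intro t ht
  have hpos : 0 < p * w1 * c1 := mul_pos_of_mul_add_mul_eq_zero_of_sub_eq_one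
    (mul_pos hp.1 hw1) (mul_pos (sub_pos.2 hp.2) hwm1) hC1 hC2
  have hshift : (P[Y1] - g) - (P[Ym1] - g) = τ0 := by rw [← hτ]; ring
  have hexpand {Z : Ω → ℝ} (hZ : MemLp Z 2 P) (a : ℝ) :
      ∫ ω, (Z ω - g - a) ^ 2 ∂P = Var[Z; P] + (P[Z] - g - a) ^ 2 := by
    simpa only [sub_sub] using integral_sub_const_sq hZ (g + a)
  simp only [hexpand hY1, hexpand hYm1]
  rw [weighted_sq_sub_eq_add_mul_sq hC1 hC2 hshift _ _ t]
  exact lt_add_of_pos_right _ (mul_pos hpos (sq_pos_of_ne_zero (sub_ne_zero.2 ht)))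

/-- Property 1 (square-error loss): under conditions C1–C3 with positive weights,
the weighted L₂ population objective has unique minimizer at the treatment effect τ₀. -/
theorem stmt0 {Ω : Type*} [MeasurableSpace Ω] (P : Measure Ω) [IsProbabilityMeasure P]
    (p w1 wm1 c1 cm1 τ0 : ℝ) (hp : p ∈ Set.Ioo (0 : ℝ) 1)
    (hC1 : p * w1 * c1 + (1 - p) * wm1 * cm1 = 0)
    (hC2 : c1 - cm1 = 1)
    (hC3 : w1 * c1 ≠ 0 ∧ wm1 * cm1 ≠ 0)
    (hw1 : 0 < w1) (hwm1 : 0 < wm1)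
    (Y1 Ym1 : Ω → ℝ)
    (hY1 : MemLp Y1 2 P) (hYm1 : MemLp Ym1 2 P)
    (hτ : (∫ ω, Y1 ω ∂P) - (∫ ω, Ym1 ω ∂P) = τ0)
    (g : ℝ) :
    ∀ t : ℝ, t ≠ τ0 →
      p * w1 * (∫ ω, (Y1 ω - g - c1 * τ0) ^ 2 ∂P)
          + (1 - p) * wm1 * (∫ ω, (Ym1 ω - g - cm1 * τ0) ^ 2 ∂P)
        < p * w1 * (∫ ω, (Y1 ω - g - c1 * t) ^ 2 ∂P)
          + (1 - p) * wm1 * (∫ ω, (Ym1 ω - g - cm1 * t) ^ 2 ∂P) :=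
  stmt0_general P p w1 wm1 c1 cm1 τ0 hp hC1 hC2 hw1 hwm1 Y1 Ym1 hY1 hYm1 hτ g
end

section
/- Let p ∈ (0,1) and let w₁, w₋₁, c₁, c₋₁ be real numbers satisfying conditions C1 and C2. Let (Ω, ℱ, ℙ) be a probability space, T : Ω → ℝ a random variable with T ∈ {−1, 1} almost surely and ℙ(T = 1) = p, and Y : Ω → ℝ integrable, with arm means μ₁, μ₋₁ defined by E[Y·1_{T=1}] = p·μ₁ and E[Y·1_{T=−1}] = (1−p)·μ₋₁. Assume μ₁ − μ₋₁ = τ₀. Then for every real number g, E[w(T)·c(T)·(Y − g − c(T)·τ₀)] = 0, where w(1) = w₁, w(−1) = w₋₁, c(1) = c₁, c(−1) = c₋₁. -/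
/-!
Under C2 and τ₀ = μ₁ − μ₋₁ we have μ₁ − c₁τ₀ = μ₋₁ − c₋₁τ₀, so the arm residual
μₜ − g − cₜτ₀ is the same number m for both arms. Splitting the expectation over the two
arms, the mean of the score is therefore (p·w₁c₁ + (1−p)·w₋₁c₋₁)·m, which vanishes by C1.
-/

open MeasureTheory

section TwoValued

variable {Ω : Type*} [MeasurableSpace Ω] {μ : Measure Ω} {T : Ω → ℝ} {a b : ℝ}

theorem setOf_eq_ae_eq_compl_of_ae_eq_or_eq (hab : a ≠ b)
    (hT : ∀ᵐ ω ∂μ, T ω = a ∨ T ω = b) :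
    ({ω | T ω = b} : Set Ω) =ᵐ[μ] ({ω | T ω = a}ᶜ : Set Ω) := by
  filter_upwards [hT] with ω hω
  change (T ω = b) = ¬(T ω = a)
  rcases hω with h | h <;> simp [h, hab, hab.symm]

theorem integral_comp_eq_setIntegral_add_setIntegral_of_ae_eq_or_eq (hTm : Measurable T)
    (hab : a ≠ b) (hT : ∀ᵐ ω ∂μ, T ω = a ∨ T ω = b) {f : ℝ → Ω → ℝ}
    (ha : IntegrableOn (f a) {ω | T ω = a} μ) (hb : IntegrableOn (f b) {ω | T ω = b} μ) :
    ∫ ω, f (T ω) ω ∂μ = ∫ ω in {ω | T ω = a}, f a ω ∂μ + ∫ ω in {ω | T ω = b}, f b ω ∂μ := by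
  have hAm : MeasurableSet {ω | T ω = a} := hTm (measurableSet_singleton a)
  have hBm : MeasurableSet {ω | T ω = b} := hTm (measurableSet_singleton b)
  have hsplit : (fun ω => f (T ω) ω) =ᵐ[μ]
      fun ω => {ω | T ω = a}.indicator (f a) ω + {ω | T ω = b}.indicator (f b) ω := by
    filter_upwards [hT] with ω hω
    rcases hω with h | h <;> simp [Set.indicator, h, hab, hab.symm]
  rw [integral_congr_ae hsplit, integral_add ((integrable_indicator_iff hAm).2 ha)
      ((integrable_indicator_iff hBm).2 hb),
    integral_indicator hAm, integral_indicator hBm]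

end TwoValued

theorem setIntegral_const_mul_sub_const {Ω : Type*} [MeasurableSpace Ω] {μ : Measure Ω}
    [IsFiniteMeasure μ] {s : Set Ω} {Y : Ω → ℝ} (hY : IntegrableOn Y s μ) (k d : ℝ) :
    ∫ ω in s, k * (Y ω - d) ∂μ = k * (∫ ω in s, Y ω ∂μ - μ.real s * d) := by
  rw [integral_const_mul, integral_sub hY (integrable_const d), setIntegral_const, smul_eq_mul]

/-- The unified score S = w(T)·c(T)·(Y − g − c(T)·τ₀) has mean zero under C1–C2. -/
theorem stmt1 {Ω : Type*} [MeasurableSpace Ω] (P : Measure Ω) [IsProbabilityMeasure P]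
    (p w1 wm1 c1 cm1 μ1 μm1 τ0 : ℝ) (hp : p ∈ Set.Ioo (0 : ℝ) 1)
    (hC1 : p * w1 * c1 + (1 - p) * wm1 * cm1 = 0)
    (hC2 : c1 - cm1 = 1)
    (T Y : Ω → ℝ) (hT : Measurable T)
    (hT1 : ∀ᵐ ω ∂P, T ω = 1 ∨ T ω = -1)
    (hpT : P {ω | T ω = 1} = ENNReal.ofReal p)
    (hY : Integrable Y P)
    (hμ1 : ∫ ω in {ω | T ω = 1}, Y ω ∂P = p * μ1)
    (hμm1 : ∫ ω in {ω | T ω = -1}, Y ω ∂P = (1 - p) * μm1)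
    (hτ : μ1 - μm1 = τ0)
    (w c : ℝ → ℝ) (hw1 : w 1 = w1) (hwm1 : w (-1) = wm1)
    (hc1 : c 1 = c1) (hcm1 : c (-1) = cm1) :
    ∀ g : ℝ, ∫ ω, w (T ω) * c (T ω) * (Y ω - g - c (T ω) * τ0) ∂P = 0 := by
  intro g
  have hP1 : P.real {ω | T ω = 1} = p := by
    rw [measureReal_def, hpT, ENNReal.toReal_ofReal hp.1.le]
  have hPm1 : P.real {ω | T ω = -1} = 1 - p := by
    rw [measureReal_congr (setOf_eq_ae_eq_compl_of_ae_eq_or_eq (by norm_num) hT1),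
      probReal_compl_eq_one_sub (measurableSet_eq_fun hT measurable_const), hP1]
  have hscore (t : ℝ) : Integrable (fun ω => w t * c t * (Y ω - (g + c t * τ0))) P :=
    (hY.sub (integrable_const _)).const_mul _
  have hresidual : μ1 - c1 * τ0 = μm1 - cm1 * τ0 := by
    linear_combination hτ - τ0 * hC2
  simp_rw [sub_sub]
  rw [integral_comp_eq_setIntegral_add_setIntegral_of_ae_eq_or_eq
      (f := fun t ω => w t * c t * (Y ω - (g + c t * τ0))) hT (by norm_num) hT1
      (hscore 1).integrableOn (hscore (-1)).integrableOn,
    setIntegral_const_mul_sub_const hY.integrableOn,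
    setIntegral_const_mul_sub_const hY.integrableOn, hμ1, hμm1, hP1, hPm1,
    hw1, hwm1, hc1, hcm1]
  linear_combination (μm1 - g - cm1 * τ0) * hC1 + p * w1 * c1 * hresidual
end

section
/- Let (Ω, ℱ, ℙ) be a probability space, T : Ω → ℝ a random variable with T ∈ {−1, 1} almost surely and ℙ(T = 1) = p ∈ (0,1), and Y : Ω → ℝ integrable, with arm means μ₁, μ₋₁ defined by E[Y·1_{T=1}] = p·μ₁ and E[Y·1_{T=−1}] = (1−p)·μ₋₁; set τ₀ = μ₁ − μ₋₁. Let p̂ ∈ (0,1) and m₁, m₋₁ ∈ ℝ be working (possibly incorrect) values of the propensity score and arm means, and set g = (1−p̂)·m₁ + p̂·m₋₁. Define the AIPW score S = ((T − 2p̂ + 1)/(2p̂(1−p̂)))·(Y − g − (2p̂(1−p̂)/(T − 2p̂ + 1))·τ₀). If either p̂ = p, or both m₁ = μ₁ and m₋₁ = μ₋₁, then E[S] = 0. -/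
/-!
Off the null set where `T ∉ {1, -1}`, the AIPW score is the inverse-probability-weighted
residual `c(T) (Y - g) - τ₀`, with weights `c(1) = 1 / p̂` and `c(-1) = -1 / (1 - p̂)`.
Integrating over the two arms gives `(p / p̂) (μ₁ - g) - ((1 - p) / (1 - p̂)) (μ₋₁ - g) - τ₀`.
If `p̂ = p` the two `g` terms cancel; if `m₁ = μ₁` and `m₋₁ = μ₋₁`, then `μ₁ - g = p̂ τ₀` and
`μ₋₁ - g = -(1 - p̂) τ₀`. Either way the mean vanishes.
-/

open MeasureTheory Set

section TwoArms

variable {Ω α E : Type*} [MeasurableSpace Ω] [MeasurableSpace α] [MeasurableSingletonClass α]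
  [NormedAddCommGroup E] [NormedSpace ℝ E] {P : Measure Ω} {T : Ω → α} {a b : α}

theorem integral_eq_setIntegral_add_setIntegral_of_ae_mem_pair (hT : Measurable T) (hab : a ≠ b)
    (hT2 : ∀ᵐ ω ∂P, T ω = a ∨ T ω = b) {F : Ω → E} (ha : IntegrableOn F {ω | T ω = a} P)
    (hb : IntegrableOn F {ω | T ω = b} P) :
    ∫ ω, F ω ∂P = ∫ ω in {ω | T ω = a}, F ω ∂P + ∫ ω in {ω | T ω = b}, F ω ∂P := by
  have hunion : ({ω | T ω = a} ∪ {ω | T ω = b} : Set Ω) =ᵐ[P] (univ : Set Ω) := by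
    rw [Filter.eventuallyEq_set]
    filter_upwards [hT2] with ω hω
    simpa using hω
  have hdisj : Disjoint {ω | T ω = a} {ω | T ω = b} :=
    disjoint_left.2 fun ω (hωa : T ω = a) (hωb : T ω = b) => hab (hωa.symm.trans hωb)
  rw [← setIntegral_univ, ← setIntegral_congr_set hunion,
    setIntegral_union hdisj (hT (measurableSet_singleton b)) ha hb]

theorem measureReal_eq_one_sub_of_ae_mem_pair [IsProbabilityMeasure P] (hT : Measurable T)
    (hab : a ≠ b) (hT2 : ∀ᵐ ω ∂P, T ω = a ∨ T ω = b) :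
    P.real {ω | T ω = b} = 1 - P.real {ω | T ω = a} := by
  have hcompl : {ω | T ω = b} =ᵐ[P] ({ω | T ω = a}ᶜ : Set Ω) := by
    rw [Filter.eventuallyEq_set]
    filter_upwards [hT2] with ω hω
    rcases hω with h | h <;> simp [h, hab, hab.symm]
  have hA : MeasurableSet {ω | T ω = a} := hT (measurableSet_singleton a)
  rw [measureReal_congr hcompl, probReal_compl_eq_one_sub hA]

end TwoArms

theorem setIntegral_mul_sub_sub {Ω : Type*} [MeasurableSpace Ω] {P : Measure Ω} [IsFiniteMeasure P]
    {s : Set Ω} {Y : Ω → ℝ} (hY : IntegrableOn Y s P) (c g τ : ℝ) :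
    ∫ ω in s, (c * (Y ω - g) - τ) ∂P = c * (∫ ω in s, Y ω ∂P - g * P.real s) - τ * P.real s := by
  have hYg : IntegrableOn (fun ω => Y ω - g) s P := hY.sub integrableOn_const
  rw [integral_sub (hYg.const_mul c) integrableOn_const, integral_const_mul,
    integral_sub hY integrableOn_const, setIntegral_const, setIntegral_const, smul_eq_mul,
    smul_eq_mul]
  ring

section AIPW

variable {q y g τ : ℝ}

theorem aipwScore_treated (hq0 : q ≠ 0) (hq1 : 1 - q ≠ 0) :
    (1 - 2 * q + 1) / (2 * q * (1 - q)) * (y - g - 2 * q * (1 - q) / (1 - 2 * q + 1) * τ) =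
      q⁻¹ * (y - g) - τ := by
  have h : 1 - 2 * q + 1 ≠ 0 := by
    contrapose! hq1
    linarith
  field_simp
  ring

theorem aipwScore_control (hq0 : q ≠ 0) (hq1 : 1 - q ≠ 0) :
    (-1 - 2 * q + 1) / (2 * q * (1 - q)) * (y - g - 2 * q * (1 - q) / (-1 - 2 * q + 1) * τ) =
      -(1 - q)⁻¹ * (y - g) - τ := by
  have h : -1 - 2 * q + 1 ≠ 0 := by
    contrapose! hq0
    linarith
  field_simp
  ring

theorem aipw_mean_eq_zero_of_robust {p μ1 μm1 m1 mm1 : ℝ} (hq0 : q ≠ 0) (hq1 : 1 - q ≠ 0)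
    (hτ : τ = μ1 - μm1) (hg : g = (1 - q) * m1 + q * mm1)
    (hrobust : q = p ∨ (m1 = μ1 ∧ mm1 = μm1)) :
    q⁻¹ * (p * μ1 - g * p) - τ * p + (-(1 - q)⁻¹ * ((1 - p) * μm1 - g * (1 - p)) - τ * (1 - p))
      = 0 := by
  subst hτ hg
  rcases hrobust with rfl | ⟨rfl, rfl⟩ <;> field_simp <;> ring

end AIPW

/-- Double robustness of the AIPW score: it has mean zero at the true τ₀ if either
the propensity model or both arm-mean models are correctly specified. -/
theorem stmt7 {Ω : Type*} [MeasurableSpace Ω] (P : Measure Ω) [IsProbabilityMeasure P]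
    (p μ1 μm1 τ0 : ℝ) (hp : p ∈ Set.Ioo (0 : ℝ) 1)
    (T Y : Ω → ℝ) (hT : Measurable T)
    (hT1 : ∀ᵐ ω ∂P, T ω = 1 ∨ T ω = -1)
    (hpT : P {ω | T ω = 1} = ENNReal.ofReal p)
    (hY : Integrable Y P)
    (hμ1 : ∫ ω in {ω | T ω = 1}, Y ω ∂P = p * μ1)
    (hμm1 : ∫ ω in {ω | T ω = -1}, Y ω ∂P = (1 - p) * μm1)
    (hτ : τ0 = μ1 - μm1)
    (phat m1 mm1 g : ℝ) (hphat : phat ∈ Set.Ioo (0 : ℝ) 1)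
    (hg : g = (1 - phat) * m1 + phat * mm1)
    (hrobust : phat = p ∨ (m1 = μ1 ∧ mm1 = μm1)) :
    ∫ ω, ((T ω - 2 * phat + 1) / (2 * phat * (1 - phat))) *
        (Y ω - g - (2 * phat * (1 - phat) / (T ω - 2 * phat + 1)) * τ0) ∂P = 0 := by
  have hq0 : phat ≠ 0 := hphat.1.ne'
  have hq1 : 1 - phat ≠ 0 := sub_ne_zero.2 hphat.2.ne'
  have hab : (1 : ℝ) ≠ -1 := by norm_num
  have hA : MeasurableSet {ω | T ω = 1} := hT (measurableSet_singleton 1)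
  have hB : MeasurableSet {ω | T ω = -1} := hT (measurableSet_singleton (-1))
  set S := fun ω => ((T ω - 2 * phat + 1) / (2 * phat * (1 - phat))) *
    (Y ω - g - (2 * phat * (1 - phat) / (T ω - 2 * phat + 1)) * τ0)
  have hSA : EqOn S (fun ω => phat⁻¹ * (Y ω - g) - τ0) {ω | T ω = 1} :=
    fun ω (hω : T ω = 1) => by simp only [S, hω]; exact aipwScore_treated hq0 hq1
  have hSB : EqOn S (fun ω => -(1 - phat)⁻¹ * (Y ω - g) - τ0) {ω | T ω = -1} :=
    fun ω (hω : T ω = -1) => by simp only [S, hω]; exact aipwScore_control hq0 hq1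
  have hPA : P.real {ω | T ω = 1} = p := by
    rw [measureReal_def, hpT, ENNReal.toReal_ofReal hp.1.le]
  have hPB : P.real {ω | T ω = -1} = 1 - p := by
    rw [measureReal_eq_one_sub_of_ae_mem_pair hT hab hT1, hPA]
  have hintA : IntegrableOn S {ω | T ω = 1} P :=
    ((hY.sub (integrable_const g)).const_mul _ |>.sub (integrable_const τ0)).integrableOn.congr_fun
      hSA.symm hA
  have hintB : IntegrableOn S {ω | T ω = -1} P :=
    ((hY.sub (integrable_const g)).const_mul _ |>.sub (integrable_const τ0)).integrableOn.congr_fun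
      hSB.symm hB
  rw [integral_eq_setIntegral_add_setIntegral_of_ae_mem_pair hT hab hT1 hintA hintB,
    setIntegral_congr_fun hA hSA, setIntegral_congr_fun hB hSB,
    setIntegral_mul_sub_sub hY.integrableOn, setIntegral_mul_sub_sub hY.integrableOn,
    hμ1, hμm1, hPA, hPB]
  exact aipw_mean_eq_zero_of_robust hq0 hq1 hτ hg hrobust
end

section
/- Let p ∈ (0,1) and let w₁, w₋₁, c₁, c₋₁ be real numbers, all nonzero, satisfying condition C1: p·w₁·c₁ + (1−p)·w₋₁·c₋₁ = 0. Let Y₁, Y₋₁ be square-integrable real random variables with means μ₁, μ₋₁, let τ₀ ∈ ℝ, and define for g ∈ ℝ the augmented-score second moment F(g) = p·w₁²·c₁²·E[(Y₁ − g − c₁·τ₀)²] + (1−p)·w₋₁²·c₋₁²·E[(Y₋₁ − g − c₋₁·τ₀)²]. Set g₀ = (1−p)·(μ₁ − c₁·τ₀) + p·(μ₋₁ − c₋₁·τ₀) and A = p·w₁²·c₁² + (1−p)·w₋₁²·c₋₁². Then for every g ∈ ℝ, F(g) = F(g₀) + A·(g₀ − g)², A > 0, and consequently g₀ is the unique minimizer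 of F. -/
/-!
Each expected square splits as a variance plus the squared distance from `g` to the shifted mean
`aᵢ = μᵢ - cᵢ τ₀`, so `F` is, up to a constant, `α (a₁ - g)² + β (a₋₁ - g)²` with
`α = p w₁² c₁²`, `β = (1 - p) w₋₁² c₋₁²`. Squaring condition C1 gives `p α = (1 - p) β`, i.e. the
normalised weights are `(1 - p, p)`; hence `g₀` is the `(α, β)`-weighted mean of `a₁, a₋₁`, and the
parallel-axis identity yields `F g = F g₀ + (α + β) (g₀ - g)²`.
-/

open MeasureTheory ProbabilityTheory

lemma integral_sub_const_sq_eq_variance_add {Ω : Type*} [MeasurableSpace Ω] {P : Measure Ω}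
    [IsProbabilityMeasure P] {X : Ω → ℝ} (hX : MemLp X 2 P) (c : ℝ) :
    ∫ ω, (X ω - c) ^ 2 ∂P = Var[X; P] + (P[X] - c) ^ 2 := by
  have hXc : MemLp (fun ω ↦ X ω - c) 2 P := hX.sub (memLp_const c)
  have hmean : ∫ ω, (X ω - c) ∂P = P[X] - c := by
    rw [integral_sub (hX.integrable one_le_two) (integrable_const c), integral_const]
    simp
  rw [← variance_sub_const hX.aestronglyMeasurable c, variance_eq_sub hXc, hmean]
  simp only [Pi.pow_apply]
  ring

lemma weighted_sq_add_sq_eq_of_weighted_mean {α β a b m : ℝ}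
    (hm : (α + β) * m = α * a + β * b) (g : ℝ) :
    α * (a - g) ^ 2 + β * (b - g) ^ 2
      = α * (a - m) ^ 2 + β * (b - m) ^ 2 + (α + β) * (m - g) ^ 2 := by
  linear_combination (-2 * (m - g)) * hm

lemma weighted_mean_of_mul_eq_one_sub_mul {p α β : ℝ} (h : p * α = (1 - p) * β) (a b : ℝ) :
    (α + β) * ((1 - p) * a + p * b) = α * a + β * b := by
  linear_combination (b - a) * h

theorem stmt10_general {Ω : Type*} [MeasurableSpace Ω] (P : Measure Ω) [IsProbabilityMeasure P]
    (p w1 wm1 c1 cm1 μ1 μm1 τ0 g0 A : ℝ) (hp : p ∈ Set.Ioo (0 : ℝ) 1)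
    (hw1 : w1 ≠ 0) (hc1 : c1 ≠ 0)
    (hC1 : p * w1 * c1 + (1 - p) * wm1 * cm1 = 0)
    (Y1 Ym1 : Ω → ℝ) (hY1 : MemLp Y1 2 P) (hYm1 : MemLp Ym1 2 P)
    (hm1 : ∫ ω, Y1 ω ∂P = μ1) (hmm1 : ∫ ω, Ym1 ω ∂P = μm1)
    (F : ℝ → ℝ)
    (hF : ∀ g, F g =
      p * w1 ^ 2 * c1 ^ 2 * (∫ ω, (Y1 ω - g - c1 * τ0) ^ 2 ∂P)
        + (1 - p) * wm1 ^ 2 * cm1 ^ 2 * (∫ ω, (Ym1 ω - g - cm1 * τ0) ^ 2 ∂P))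
    (hg0 : g0 = (1 - p) * (μ1 - c1 * τ0) + p * (μm1 - cm1 * τ0))
    (hA : A = p * w1 ^ 2 * c1 ^ 2 + (1 - p) * wm1 ^ 2 * cm1 ^ 2) :
    (∀ g : ℝ, F g = F g0 + A * (g0 - g) ^ 2) ∧ 0 < A ∧
    (∀ g : ℝ, g ≠ g0 → F g0 < F g) := by
  set α := p * w1 ^ 2 * c1 ^ 2
  set β := (1 - p) * wm1 ^ 2 * cm1 ^ 2
  have hF_split : ∀ g, F g = α * Var[Y1; P] + β * Var[Ym1; P]
      + (α * (μ1 - c1 * τ0 - g) ^ 2 + β * (μm1 - cm1 * τ0 - g) ^ 2) := by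
    intro g
    simp_rw [hF, sub_sub, integral_sub_const_sq_eq_variance_add hY1,
      integral_sub_const_sq_eq_variance_add hYm1, hm1, hmm1]
    ring
  have hbalance : p * α = (1 - p) * β := by
    linear_combination (p * w1 * c1 - (1 - p) * wm1 * cm1) * hC1
  have hmean : (α + β) * g0 = α * (μ1 - c1 * τ0) + β * (μm1 - cm1 * τ0) := by
    rw [hg0, weighted_mean_of_mul_eq_one_sub_mul hbalance]
  have hdecomp : ∀ g, F g = F g0 + A * (g0 - g) ^ 2 := by
    intro g
    rw [hF_split g, hF_split g0, weighted_sq_add_sq_eq_of_weighted_mean hmean, hA]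
    ring
  have hA_pos : 0 < A := by
    obtain ⟨hp0, hp1⟩ := hp
    have : 0 < 1 - p := sub_pos.mpr hp1
    rw [hA]
    positivity
  refine ⟨hdecomp, hA_pos, fun g hg ↦ ?_⟩
  rw [hdecomp g, lt_add_iff_pos_right]
  have : g0 - g ≠ 0 := sub_ne_zero.mpr hg.symm
  positivity

/-- Orthogonal decomposition of the augmented-score second moment (Property 2 proof):
F(g) = F(g₀) + A·(g₀ − g)² with A > 0, so g₀ is the unique minimizer. -/
theorem stmt10 {Ω : Type*} [MeasurableSpace Ω] (P : Measure Ω) [IsProbabilityMeasure P]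
    (p w1 wm1 c1 cm1 μ1 μm1 τ0 g0 A : ℝ) (hp : p ∈ Set.Ioo (0 : ℝ) 1)
    (hw1 : w1 ≠ 0) (hwm1 : wm1 ≠ 0) (hc1 : c1 ≠ 0) (hcm1 : cm1 ≠ 0)
    (hC1 : p * w1 * c1 + (1 - p) * wm1 * cm1 = 0)
    (Y1 Ym1 : Ω → ℝ) (hY1 : MemLp Y1 2 P) (hYm1 : MemLp Ym1 2 P)
    (hm1 : ∫ ω, Y1 ω ∂P = μ1) (hmm1 : ∫ ω, Ym1 ω ∂P = μm1)
    (F : ℝ → ℝ)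
    (hF : ∀ g, F g =
      p * w1 ^ 2 * c1 ^ 2 * (∫ ω, (Y1 ω - g - c1 * τ0) ^ 2 ∂P)
        + (1 - p) * wm1 ^ 2 * cm1 ^ 2 * (∫ ω, (Ym1 ω - g - cm1 * τ0) ^ 2 ∂P))
    (hg0 : g0 = (1 - p) * (μ1 - c1 * τ0) + p * (μm1 - cm1 * τ0))
    (hA : A = p * w1 ^ 2 * c1 ^ 2 + (1 - p) * wm1 ^ 2 * cm1 ^ 2) :
    (∀ g : ℝ, F g = F g0 + A * (g0 - g) ^ 2) ∧ 0 < A ∧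
    (∀ g : ℝ, g ≠ g0 → F g0 < F g) :=
  stmt10_general P p w1 wm1 c1 cm1 μ1 μm1 τ0 g0 A hp hw1 hc1 hC1 Y1 Ym1 hY1 hYm1 hm1 hmm1 F hF hg0
    hA
end

section
/- Let p ∈ (0,1) and let w₁, w₋₁, c₁, c₋₁ be real numbers satisfying conditions C1–C3 with w₁ > 0 and w₋₁ > 0. Let Y₁, Y₋₁ be integrable real random variables (on possibly different probability spaces) such that Y₁ − τ₀/2 and Y₋₁ + τ₀/2 are identically distributed. Then for every real number g, the function L(t) = p·w₁·E|Y₁ − g − c₁·t| + (1−p)·w₋₁·E|Y₋₁ − g − c₋₁·t| attains its minimum over t ∈ ℝ at t = τ₀; that is, L(τ₀) ≤ L(t) for all t ∈ ℝ. -/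
/-!
Write `α = p w₁`, `β = (1 - p) w₋₁` and `F a = E|Y₁ - a|`. Since `Y₋₁` has the law of `Y₁ - τ₀`,
the objective is `α F (g + c₁ t) + β F (g + c₋₁ t + τ₀)`. By C1 and C2 the weighted mean
`(α (g + c₁ t) + β (g + c₋₁ t + τ₀)) / (α + β)` equals `g + c₁ τ₀` for every `t`, which at `t = τ₀` is
also the common value of both arguments, so the triangle inequality for `|·|`, integrated, gives
the claim.
-/

open MeasureTheory ProbabilityTheory

lemma add_mul_abs_sub_le {α β x y z w : ℝ} (hα : 0 ≤ α) (hβ : 0 ≤ β)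
    (hz : α * x + β * y = (α + β) * z) :
    (α + β) * |w - z| ≤ α * |w - x| + β * |w - y| :=
  calc (α + β) * |w - z| = |α * (w - x) + β * (w - y)| := by
        rw [← abs_of_nonneg (add_nonneg hα hβ), ← abs_mul]
        congr 1
        linear_combination hz
    _ ≤ |α * (w - x)| + |β * (w - y)| := abs_add_le _ _
    _ = α * |w - x| + β * |w - y| := by
        rw [abs_mul, abs_mul, abs_of_nonneg hα, abs_of_nonneg hβ]

lemma add_mul_integral_abs_sub_le {Ω : Type*} [MeasurableSpace Ω] {μ : Measure Ω}
    [IsFiniteMeasure μ] {f : Ω → ℝ} (hf : Integrable f μ) {α β x y z : ℝ}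
    (hα : 0 ≤ α) (hβ : 0 ≤ β) (hz : α * x + β * y = (α + β) * z) :
    (α + β) * ∫ ω, |f ω - z| ∂μ ≤ α * ∫ ω, |f ω - x| ∂μ + β * ∫ ω, |f ω - y| ∂μ := by
  have hint : ∀ a, Integrable (fun ω => |f ω - a|) μ := fun a => (hf.sub (integrable_const a)).abs
  rw [← integral_const_mul, ← integral_const_mul, ← integral_const_mul,
    ← integral_add ((hint x).const_mul α) ((hint y).const_mul β)]
  exact integral_mono ((hint z).const_mul _) (((hint x).const_mul α).add ((hint y).const_mul β))
    fun ω => add_mul_abs_sub_le hα hβ hz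

lemma integral_abs_sub_eq_of_identDistrib_sub_add {Ω₁ Ω₂ : Type*} [MeasurableSpace Ω₁]
    [MeasurableSpace Ω₂] {μ : Measure Ω₁} {ν : Measure Ω₂} {X : Ω₁ → ℝ} {Y : Ω₂ → ℝ} {δ : ℝ}
    (h : IdentDistrib (fun ω => X ω - δ / 2) (fun ω => Y ω + δ / 2) μ ν) (a : ℝ) :
    ∫ ω, |Y ω - a| ∂ν = ∫ ω, |X ω - (a + δ)| ∂μ := by
  have := (h.comp (measurable_id.sub_const (δ / 2 + a)).abs).integral_eq
  simp only [Function.comp_def, id] at this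
  convert this.symm using 3 <;> ring_nf

theorem stmt12_general {Ω₁ Ω₂ : Type*} [MeasurableSpace Ω₁] [MeasurableSpace Ω₂]
    (P1 : Measure Ω₁) (P2 : Measure Ω₂)
    [IsProbabilityMeasure P1]
    (p w1 wm1 c1 cm1 τ0 : ℝ) (hp : p ∈ Set.Ioo (0 : ℝ) 1)
    (hC1 : p * w1 * c1 + (1 - p) * wm1 * cm1 = 0)
    (hC2 : c1 - cm1 = 1)
    (hw1 : 0 < w1) (hwm1 : 0 < wm1)
    (Y1 : Ω₁ → ℝ) (Ym1 : Ω₂ → ℝ)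
    (hY1i : Integrable Y1 P1) (hYm1i : Integrable Ym1 P2)
    (hid : Measure.map (fun ω => Y1 ω - τ0 / 2) P1
          = Measure.map (fun ω => Ym1 ω + τ0 / 2) P2)
    (g : ℝ) :
    ∀ t : ℝ,
      p * w1 * (∫ ω, |Y1 ω - g - c1 * τ0| ∂P1)
          + (1 - p) * wm1 * (∫ ω, |Ym1 ω - g - cm1 * τ0| ∂P2)
        ≤ p * w1 * (∫ ω, |Y1 ω - g - c1 * t| ∂P1)
          + (1 - p) * wm1 * (∫ ω, |Ym1 ω - g - cm1 * t| ∂P2) := by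
  intro t
  obtain ⟨hp0, hp1⟩ := hp
  have hident : IdentDistrib (fun ω => Y1 ω - τ0 / 2) (fun ω => Ym1 ω + τ0 / 2) P1 P2 :=
    ⟨hY1i.aemeasurable.sub_const _, hYm1i.aemeasurable.add_const _, hid⟩
  simp only [sub_sub, integral_abs_sub_eq_of_identDistrib_sub_add hident]
  have hτ0 : g + cm1 * τ0 + τ0 = g + c1 * τ0 := by linear_combination -τ0 * hC2
  have hmean : p * w1 * (g + c1 * t) + (1 - p) * wm1 * (g + cm1 * t + τ0)
      = (p * w1 + (1 - p) * wm1) * (g + c1 * τ0) := by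
    linear_combination (t - τ0) * hC1 - (1 - p) * wm1 * τ0 * hC2
  have key := add_mul_integral_abs_sub_le hY1i (mul_pos hp0 hw1).le
    (mul_pos (sub_pos.mpr hp1) hwm1).le hmean
  rw [hτ0]
  linarith

/-- Property 3 (L₁ loss): under C1–C3 with positive weights and identically
distributed centered potential outcomes, the weighted L₁ population objective
attains its minimum at τ₀. -/
theorem stmt12 {Ω₁ Ω₂ : Type*} [MeasurableSpace Ω₁] [MeasurableSpace Ω₂]
    (P1 : Measure Ω₁) (P2 : Measure Ω₂)
    [IsProbabilityMeasure P1] [IsProbabilityMeasure P2]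
    (p w1 wm1 c1 cm1 τ0 : ℝ) (hp : p ∈ Set.Ioo (0 : ℝ) 1)
    (hC1 : p * w1 * c1 + (1 - p) * wm1 * cm1 = 0)
    (hC2 : c1 - cm1 = 1)
    (hC3 : w1 * c1 ≠ 0 ∧ wm1 * cm1 ≠ 0)
    (hw1 : 0 < w1) (hwm1 : 0 < wm1)
    (Y1 : Ω₁ → ℝ) (Ym1 : Ω₂ → ℝ)
    (hY1m : Measurable Y1) (hYm1m : Measurable Ym1)
    (hY1i : Integrable Y1 P1) (hYm1i : Integrable Ym1 P2)
    (hid : Measure.map (fun ω => Y1 ω - τ0 / 2) P1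
          = Measure.map (fun ω => Ym1 ω + τ0 / 2) P2)
    (g : ℝ) :
    ∀ t : ℝ,
      p * w1 * (∫ ω, |Y1 ω - g - c1 * τ0| ∂P1)
          + (1 - p) * wm1 * (∫ ω, |Ym1 ω - g - cm1 * τ0| ∂P2)
        ≤ p * w1 * (∫ ω, |Y1 ω - g - c1 * t| ∂P1)
          + (1 - p) * wm1 * (∫ ω, |Ym1 ω - g - cm1 * t| ∂P2) :=
  stmt12_general P1 P2 p w1 wm1 c1 cm1 τ0 hp hC1 hC2 hw1 hwm1 Y1 Ym1 hY1i hYm1i hid g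
end
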